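/- arXiv:1906.01948 — 4 statements merged into one kernel-verified Lean document; each statement's English description precedes it below -/
import Mathlib

section
/- For every integer n ≥ 2 and every f ∈ J_n, the element ds_n(f) lies in J_{n−2}; that is, ds_n(f) is a symmetric Laurent polynomial in x_1, …, x_{n−2}, and when n ≥ 4 its image under ev_{n−2} does not involve t. -/
/-!
Common setup: `R n` is the ring of Laurent polynomials
`ℤ[x₁^{±1}, …, xₙ^{±1}]`, realized as the group algebra over `ℤ` of the
group `ℤ^n` of exponent vectors (`AddMonoidAlgebra ℤ (Fin n → ℤ)`).
-/

noncomputable section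

/-- The ring `Rₙ = ℤ[x₁^{±1}, …, xₙ^{±1}]` of Laurent polynomials in `n` variables. -/
abbrev R (n : ℕ) : Type := AddMonoidAlgebra ℤ (Fin n → ℤ)

/-- The variable `xᵢ` of `R n` (`i` is a `0`-based index). -/
def X {n : ℕ} (i : Fin n) : R n := AddMonoidAlgebra.single (Pi.single i (1 : ℤ)) 1

/-- The inverse `xᵢ⁻¹` of the variable `xᵢ` of `R n`. -/
def Xinv {n : ℕ} (i : Fin n) : R n := AddMonoidAlgebra.single (Pi.single i (-1 : ℤ)) 1

/-- The action of a permutation `w` on exponent vectors. -/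
def permExp {n : ℕ} (w : Equiv.Perm (Fin n)) : (Fin n → ℤ) →+ (Fin n → ℤ) :=
  AddMonoidHom.mk' (fun m => m ∘ w.symm) (fun _ _ => rfl)

/-- The action of `w ∈ Sₙ` on `R n`, permuting the variables (`xᵢ ↦ x_{w i}`). -/
def permHom {n : ℕ} (w : Equiv.Perm (Fin n)) : R n →+* R n :=
  AddMonoidAlgebra.mapDomainRingHom ℤ (permExp w)

/-- `f` is a symmetric Laurent polynomial, i.e. `f ∈ Rₙ^{Sₙ}`. -/
def SymmP {n : ℕ} (f : R n) : Prop := ∀ w : Equiv.Perm (Fin n), permHom w f = f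

/-- The map of exponent groups underlying the evaluation
`xᵢ ↦ xᵢ (1 ≤ i ≤ n-2), x_{n-1} ↦ t, xₙ ↦ t⁻¹`; the second coordinate of the
target records the exponent of `t`. -/
def evExp (n : ℕ) : (Fin n → ℤ) →+ ((Fin (n - 2) → ℤ) × ℤ) :=
  AddMonoidHom.mk'
    (fun m => (fun i => m (Fin.castLE (Nat.sub_le n 2) i),
      if h : 2 ≤ n then m ⟨n - 2, by omega⟩ - m ⟨n - 1, by omega⟩ else 0))
    (by
      intro a b
      refine Prod.ext (funext fun i => rfl) ?_
      by_cases h : 2 ≤ n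
      · simp [h]; ring
      · simp [h])

/-- The evaluation homomorphism
`evₙ : ℤ[x₁^{±1},…,xₙ^{±1}] → ℤ[x₁^{±1},…,x_{n-2}^{±1}, t^{±1}]` determined by
`xᵢ ↦ xᵢ` for `1 ≤ i ≤ n-2`, `x_{n-1} ↦ t`, `xₙ ↦ t⁻¹`.  The target is realized
as the group algebra of `ℤ^{n-2} × ℤ`, the last factor recording the exponent
of `t`. -/
def ev (n : ℕ) : R n →+* AddMonoidAlgebra ℤ ((Fin (n - 2) → ℤ) × ℤ) :=
  AddMonoidAlgebra.mapDomainRingHom ℤ (evExp n)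

/-- An element of `ℤ[x₁^{±1},…,x_{n-2}^{±1}, t^{±1}]` "does not involve `t`",
i.e. it lies in the image of the subring `ℤ[x₁^{±1},…,x_{n-2}^{±1}]`. -/
def NoT (n : ℕ) (g : AddMonoidAlgebra ℤ ((Fin (n - 2) → ℤ) × ℤ)) : Prop :=
  g ∈ Set.range
    (AddMonoidAlgebra.mapDomainRingHom ℤ (AddMonoidHom.inl (Fin (n - 2) → ℤ) ℤ))

/-- `J n`: for `n ≥ 2`, the set of symmetric Laurent polynomials `f` such that
`evₙ f` does not involve `t`; for `n = 0, 1` it is all of `Rₙ^{Sₙ}`. -/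
def J (n : ℕ) : Set (R n) := {f | SymmP f ∧ (2 ≤ n → NoT n (ev n f))}

/-- Restriction of exponent vectors to the first `n - 2` coordinates. -/
def resExp (n : ℕ) : (Fin n → ℤ) →+ (Fin (n - 2) → ℤ) :=
  AddMonoidHom.mk' (fun m i => m (Fin.castLE (Nat.sub_le n 2) i)) (fun _ _ => rfl)

/-- The ring homomorphism `R n → R (n-2)` which, on `J n`, is the
Duflo–Serganova map `dsₙ`: for `f ∈ J n` it is exactly `evₙ f` regarded as an
element of `ℤ[x₁^{±1},…,x_{n-2}^{±1}]` (the `t`-degree-`0` part of `evₙ f`). -/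
def ds (n : ℕ) : R n →+* R (n - 2) :=
  AddMonoidAlgebra.mapDomainRingHom ℤ (resExp n)

/-- The product `∏_{1 ≤ i < j ≤ n} (1 - xᵢ xⱼ)`. -/
def P (n : ℕ) : R n :=
  ∏ p ∈ Finset.univ.filter (fun p : Fin n × Fin n => p.1 < p.2), (1 - X p.1 * X p.2)

lemma mapDRH_apply {α β : Type*} [AddMonoid α] [AddMonoid β] (F : α →+ β)
    (x : AddMonoidAlgebra ℤ α) :
    AddMonoidAlgebra.mapDomainRingHom ℤ F x = AddMonoidAlgebra.mapDomain ⇑F x := rfl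

def extPerm {n : ℕ} (w : Equiv.Perm (Fin (n - 2))) : Equiv.Perm (Fin n) where
  toFun i := if h : (i : ℕ) < n - 2 then Fin.castLE (Nat.sub_le n 2) (w ⟨i, h⟩) else i
  invFun i := if h : (i : ℕ) < n - 2 then Fin.castLE (Nat.sub_le n 2) (w.symm ⟨i, h⟩) else i
  left_inv i := by
    by_cases h : (i : ℕ) < n - 2
    · have h2 : ((Fin.castLE (Nat.sub_le n 2) (w ⟨i, h⟩) : Fin n) : ℕ) < n - 2 :=
        (w ⟨i, h⟩).isLt
      simp only [h, dif_pos, h2]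
      ext; simp
    · simp only [h, dif_neg, not_false_iff]
  right_inv i := by
    by_cases h : (i : ℕ) < n - 2
    · have h2 : ((Fin.castLE (Nat.sub_le n 2) (w.symm ⟨i, h⟩) : Fin n) : ℕ) < n - 2 :=
        (w.symm ⟨i, h⟩).isLt
      simp only [h, dif_pos, h2]
      ext; simp
    · simp only [h, dif_neg, not_false_iff]

lemma extPerm_symm_castLE {n : ℕ} (w : Equiv.Perm (Fin (n - 2))) (i : Fin (n - 2)) :
    (extPerm (n := n) w).symm (Fin.castLE (Nat.sub_le n 2) i) =
      Fin.castLE (Nat.sub_le n 2) (w.symm i) := by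
  show (if h : ((Fin.castLE (Nat.sub_le n 2) i : Fin n) : ℕ) < n - 2
      then Fin.castLE (Nat.sub_le n 2) (w.symm ⟨(Fin.castLE (Nat.sub_le n 2) i : Fin n), h⟩)
      else Fin.castLE (Nat.sub_le n 2) i) = _
  have h : ((Fin.castLE (Nat.sub_le n 2) i : Fin n) : ℕ) < n - 2 := i.isLt
  simp only [h, dif_pos]
  rfl

lemma mapD_mapD {α β γ : Type*} (F : α → β) (G : β → γ) (f : AddMonoidAlgebra ℤ α) :
    AddMonoidAlgebra.mapDomain G (AddMonoidAlgebra.mapDomain F f) = AddMonoidAlgebra.mapDomain (G ∘ F) f :=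
  congrArg AddMonoidAlgebra.ofCoeff Finsupp.mapDomain_comp.symm

/-- The double swap `(n-4, n-2)(n-3, n-1)`. -/
def dsw (n : ℕ) (h : 4 ≤ n) : Equiv.Perm (Fin n) :=
  (Equiv.swap ⟨n - 4, by omega⟩ ⟨n - 2, by omega⟩).trans
    (Equiv.swap ⟨n - 3, by omega⟩ ⟨n - 1, by omega⟩)

lemma dsw_apply_a (n : ℕ) (h : 4 ≤ n) :
    dsw n h ⟨n - 4, by omega⟩ = ⟨n - 2, by omega⟩ := by
  unfold dsw
  rw [Equiv.trans_apply, Equiv.swap_apply_left]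
  apply Equiv.swap_apply_of_ne_of_ne <;> · simp only [ne_eq, Fin.mk.injEq]; omega

lemma dsw_apply_b (n : ℕ) (h : 4 ≤ n) :
    dsw n h ⟨n - 3, by omega⟩ = ⟨n - 1, by omega⟩ := by
  unfold dsw
  rw [Equiv.trans_apply]
  have h1 : Equiv.swap (⟨n - 4, by omega⟩ : Fin n) ⟨n - 2, by omega⟩ ⟨n - 3, by omega⟩
      = ⟨n - 3, by omega⟩ := by
    apply Equiv.swap_apply_of_ne_of_ne <;> · simp only [ne_eq, Fin.mk.injEq]; omega
  rw [h1, Equiv.swap_apply_left]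

lemma dsw_fix (n : ℕ) (h : 4 ≤ n) (x : Fin n) (hx : (x : ℕ) < n - 4) :
    dsw n h x = x := by
  unfold dsw
  rw [Equiv.trans_apply]
  have h1 : Equiv.swap (⟨n - 4, by omega⟩ : Fin n) ⟨n - 2, by omega⟩ x = x := by
    apply Equiv.swap_apply_of_ne_of_ne <;>
      · simp only [ne_eq, Fin.ext_iff]; omega
  rw [h1]
  apply Equiv.swap_apply_of_ne_of_ne <;>
    · simp only [ne_eq, Fin.ext_iff]; omega

lemma dsw_symm_c (n : ℕ) (h : 4 ≤ n) :
    (dsw n h).symm ⟨n - 2, by omega⟩ = ⟨n - 4, by omega⟩ := by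
  rw [Equiv.symm_apply_eq, dsw_apply_a]

lemma dsw_symm_d (n : ℕ) (h : 4 ≤ n) :
    (dsw n h).symm ⟨n - 1, by omega⟩ = ⟨n - 3, by omega⟩ := by
  rw [Equiv.symm_apply_eq, dsw_apply_b]

lemma dsw_symm_fix (n : ℕ) (h : 4 ≤ n) (x : Fin n) (hx : (x : ℕ) < n - 4) :
    (dsw n h).symm x = x := by
  rw [Equiv.symm_apply_eq, dsw_fix n h x hx]

/-- For every `n ≥ 2` and every `f ∈ Jₙ`, the element `dsₙ f`
lies in `J_{n-2}`: it is a symmetric Laurent polynomial in `x₁, …, x_{n-2}`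
and (when `n ≥ 4`) its image under `ev_{n-2}` does not involve `t`. -/
theorem ds_mem_J (n : ℕ) (hn : 2 ≤ n) (f : R n) (hf : f ∈ J n) :
    ds n f ∈ J (n - 2) := by
  obtain ⟨hsym, hnot⟩ := hf
  have hsym' : ∀ w : Equiv.Perm (Fin n), AddMonoidAlgebra.mapDomain (⇑(permExp w)) f = f := by
    intro w
    have := hsym w
    rwa [permHom, mapDRH_apply] at this
  constructor
  · intro w
    show (AddMonoidAlgebra.mapDomainRingHom ℤ (permExp w)) (ds n f) = ds n f
    rw [ds, mapDRH_apply, mapDRH_apply, mapD_mapD]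
    have hcomp : (⇑(permExp w) ∘ ⇑(resExp n) : (Fin n → ℤ) → (Fin (n - 2) → ℤ))
        = ⇑(resExp n) ∘ ⇑(permExp (extPerm w)) := by
      funext m
      funext i
      show (resExp n m) (w.symm i) = (resExp n) ((permExp (extPerm w)) m) i
      show m (Fin.castLE (Nat.sub_le n 2) (w.symm i))
        = m ((extPerm (n := n) w).symm (Fin.castLE (Nat.sub_le n 2) i))
      rw [extPerm_symm_castLE]
    rw [hcomp, ← mapD_mapD, hsym' (extPerm w)]
  · intro hn2
    have hn4 : 4 ≤ n := by omega
    obtain ⟨g, hg⟩ := hnot hn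
    rw [ev, mapDRH_apply, mapDRH_apply] at hg
    let σ : Equiv.Perm (Fin n) := dsw n hn4
    let χ : ((Fin (n - 2) → ℤ) × ℤ) →+ ((Fin (n - 2 - 2) → ℤ) × ℤ) :=
      (resExp (n - 2)).prodMap (AddMonoidHom.id ℤ)
    have key : (⇑(evExp (n - 2)) ∘ ⇑(resExp n) : (Fin n → ℤ) → _)
        = ⇑χ ∘ ⇑(evExp n) ∘ ⇑(permExp σ) := by
      funext m
      show evExp (n - 2) (resExp n m) = χ (evExp n (permExp σ m))
      have hL : evExp (n - 2) (resExp n m)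
          = (fun i : Fin (n - 2 - 2) => m (Fin.castLE (Nat.sub_le n 2)
              (Fin.castLE (Nat.sub_le (n - 2) 2) i)),
             m ⟨n - 4, by omega⟩ - m ⟨n - 3, by omega⟩) := by
        simp only [evExp, resExp, AddMonoidHom.mk'_apply, dif_pos hn2]
        refine Prod.ext rfl ?_
        show m (Fin.castLE (Nat.sub_le n 2) ⟨n - 2 - 2, _⟩)
            - m (Fin.castLE (Nat.sub_le n 2) ⟨n - 2 - 1, _⟩) = _
        congr 1 <;> · congr 1; ext; simp only [Fin.coe_castLE]; omega
      have hR : χ (evExp n (permExp σ m))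
          = (fun i : Fin (n - 2 - 2) => (m ∘ ⇑σ.symm) (Fin.castLE (Nat.sub_le n 2)
              (Fin.castLE (Nat.sub_le (n - 2) 2) i)),
            (m ∘ ⇑σ.symm) ⟨n - 2, by omega⟩ - (m ∘ ⇑σ.symm) ⟨n - 1, by omega⟩) := by
        simp only [χ, evExp, resExp, permExp, AddMonoidHom.mk'_apply,
          AddMonoidHom.coe_prodMap, Prod.map_apply, AddMonoidHom.id_apply, dif_pos hn]
      rw [hL, hR]
      refine Prod.ext ?_ ?_
      · funext i
        have hi : ((Fin.castLE (Nat.sub_le n 2)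
            (Fin.castLE (Nat.sub_le (n - 2) 2) i) : Fin n) : ℕ) < n - 4 := by
          have := i.isLt; simp only [Fin.coe_castLE]; omega
        show m _ = m (σ.symm _)
        rw [dsw_symm_fix n hn4 _ hi]
      · show m ⟨n - 4, by omega⟩ - m ⟨n - 3, by omega⟩
          = m (σ.symm ⟨n - 2, by omega⟩) - m (σ.symm ⟨n - 1, by omega⟩)
        rw [dsw_symm_c n hn4, dsw_symm_d n hn4]
    show NoT (n - 2) (ev (n - 2) (ds n f))
    refine ⟨AddMonoidAlgebra.mapDomain (⇑(resExp (n - 2))) g, ?_⟩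
    have hcomp2 : (⇑χ ∘ ⇑(AddMonoidHom.inl (Fin (n - 2) → ℤ) ℤ))
        = ⇑(AddMonoidHom.inl (Fin (n - 2 - 2) → ℤ) ℤ) ∘ ⇑(resExp (n - 2)) := by
      funext r; rfl
    have lhs_eq : AddMonoidAlgebra.mapDomain (⇑(AddMonoidHom.inl (Fin (n - 2 - 2) → ℤ) ℤ))
          (AddMonoidAlgebra.mapDomain (⇑(resExp (n - 2))) g)
        = AddMonoidAlgebra.mapDomain (⇑χ)
          (AddMonoidAlgebra.mapDomain (⇑(AddMonoidHom.inl (Fin (n - 2) → ℤ) ℤ)) g) := by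
      rw [mapD_mapD, mapD_mapD, hcomp2]
    have rhs_eq : ev (n - 2) (ds n f)
        = AddMonoidAlgebra.mapDomain (⇑χ) (AddMonoidAlgebra.mapDomain (⇑(evExp n)) f) := by
      rw [ev, ds, mapDRH_apply, mapDRH_apply, mapD_mapD, key,
        ← mapD_mapD (⇑(evExp n) ∘ ⇑(permExp σ)) (⇑χ) f,
        ← mapD_mapD (⇑(permExp σ)) (⇑(evExp n)) f, hsym' σ]
    rw [mapDRH_apply, lhs_eq, rhs_eq, hg]

end
end

section
/- Let n ≥ 2 and let f ∈ R_n^{S_n} be a symmetric Laurent polynomial. Then ev_n(f) = 0 if and only if f = (∏_{1 ≤ i < j ≤ n} (1 − x_i x_j)) · g for some symmetric Laurent polynomial g ∈ R_n^{S_n}. In particular, the kernel of ds_n on J_n equals the set of all products (∏_{1 ≤ i < j ≤ n} (1 − x_i x_j)) · g with g ∈ R_n^{S_n}. -/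
/-!
Common setup: `R n` is the ring of Laurent polynomials
`ℤ[x₁^{±1}, …, xₙ^{±1}]`, realized as the group algebra over `ℤ` of the
group `ℤ^n` of exponent vectors (`AddMonoidAlgebra ℤ (Fin n → ℤ)`).
-/

noncomputable section

-- monomial
def Xpow {n : ℕ} (m : Fin n → ℤ) : R n := AddMonoidAlgebra.single m 1

lemma Xpow_mul {n : ℕ} (a b : Fin n → ℤ) : Xpow a * Xpow b = Xpow (a + b) := by
  simp [Xpow, AddMonoidAlgebra.single_mul_single]

lemma Xpow_zero {n : ℕ} : Xpow (0 : Fin n → ℤ) = 1 := rfl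

lemma X_mul_X {n : ℕ} (i j : Fin n) :
    X i * X j = Xpow (Pi.single i 1 + Pi.single j 1) := by
  simp [X, Xpow, AddMonoidAlgebra.single_mul_single]

lemma mdr_apply {M N : Type*} [AddCommMonoid M] [AddCommMonoid N] (φ : M →+ N)
    (f : AddMonoidAlgebra ℤ M) :
    AddMonoidAlgebra.mapDomainRingHom ℤ φ f
        = AddMonoidAlgebra.ofCoeff (Finsupp.mapDomain (⇑φ) f.coeff) := rfl

lemma mdr_single {M N : Type*} [AddCommMonoid M] [AddCommMonoid N] (φ : M →+ N)
    (a : M) (c : ℤ) :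
    AddMonoidAlgebra.mapDomainRingHom ℤ φ (AddMonoidAlgebra.single a c)
      = AddMonoidAlgebra.single (φ a) c := by
  rw [mdr_apply]; exact AddMonoidAlgebra.mapDomain_single

lemma one_sub_dvd_nat {n : ℕ} (e : Fin n → ℤ) (k : ℕ) :
    (1 - Xpow e) ∣ (1 - Xpow ((k : ℤ) • e)) := by
  have h : Xpow ((k : ℤ) • e) = (Xpow e) ^ k := by
    simp [Xpow, AddMonoidAlgebra.single_pow, ← Nat.cast_smul_eq_nsmul ℤ]
  rw [h]
  simpa using sub_dvd_pow_sub_pow 1 (Xpow e) k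

lemma one_sub_dvd {n : ℕ} (e : Fin n → ℤ) (a : ℤ) :
    (1 - Xpow e) ∣ (1 - Xpow (a • e)) := by
  rcases le_or_gt 0 a with h | h
  · lift a to ℕ using h
    exact one_sub_dvd_nat e a
  · have key : 1 - Xpow (a • e) = -(Xpow (a • e) * (1 - Xpow ((-a) • e))) := by
      rw [mul_sub, mul_one, Xpow_mul]
      simp [← add_smul, Xpow_zero]
    rw [key]
    apply Dvd.dvd.neg_right
    apply Dvd.dvd.mul_left
    have : (0:ℤ) ≤ -a := by omega
    lift (-a) to ℕ using this with k hk
    exact one_sub_dvd_nat e k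

def sE (n : ℕ) : ((Fin (n - 2) → ℤ) × ℤ) →+ (Fin n → ℤ) :=
  AddMonoidHom.mk'
    (fun b i => if h : (i : ℕ) < n - 2 then b.1 ⟨i, h⟩ else if (i : ℕ) = n - 2 then b.2 else 0)
    (by
      intro a b
      funext i
      by_cases h : (i : ℕ) < n - 2 <;> by_cases h2 : (i : ℕ) = n - 2 <;>
        simp [h, h2])

lemma evExp_fst (n : ℕ) (m : Fin n → ℤ) (i : Fin (n-2)) :
    (evExp n m).1 i = m (Fin.castLE (Nat.sub_le n 2) i) := rfl

lemma evExp_snd {n : ℕ} (hn : 2 ≤ n) (m : Fin n → ℤ) :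
    (evExp n m).2 = m ⟨n - 2, by omega⟩ - m ⟨n - 1, by omega⟩ := by
  simp [evExp, dif_pos hn]

lemma sE_section {n : ℕ} (hn : 2 ≤ n) (m : Fin n → ℤ) :
    sE n (evExp n m) = m - (m ⟨n - 1, by omega⟩) •
      (Pi.single (⟨n - 2, by omega⟩ : Fin n) 1 + Pi.single (⟨n - 1, by omega⟩ : Fin n) 1) := by
  have hne : (⟨n - 2, by omega⟩ : Fin n) ≠ ⟨n - 1, by omega⟩ := by
    simp [Fin.ext_iff]; omega
  funext i
  by_cases h : (i : ℕ) < n - 2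
  · have hi2 : i ≠ ⟨n - 2, by omega⟩ := by simp [Fin.ext_iff]; omega
    have hi1 : i ≠ ⟨n - 1, by omega⟩ := by simp [Fin.ext_iff]; omega
    have : Fin.castLE (Nat.sub_le n 2) (⟨(i : ℕ), h⟩ : Fin (n-2)) = i := by
      simp [Fin.ext_iff]
    simp [sE, dif_pos h, evExp_fst, this, Pi.single_apply, hi2, hi1, Pi.sub_apply]
  · by_cases h2 : (i : ℕ) = n - 2
    · have hi : i = ⟨n - 2, by omega⟩ := by simp [Fin.ext_iff, h2]
      simp [sE, dif_neg h, h2, evExp_snd hn, hi, Pi.single_apply, hne, Pi.sub_apply,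
        Fin.ext_iff]
    · have h1 : (i : ℕ) = n - 1 := by omega
      have hi : i = ⟨n - 1, by omega⟩ := by simp [Fin.ext_iff, h1]
      have hL : sE n (evExp n m) i = 0 := by simp [sE, dif_neg h, h2]
      have hne' : (⟨n - 1, by omega⟩ : Fin n) ≠ ⟨n - 2, by omega⟩ := hne.symm
      rw [hL, hi]
      simp [Pi.single_apply, hne']

def sRH (n : ℕ) : AddMonoidAlgebra ℤ ((Fin (n - 2) → ℤ) × ℤ) →+* R n :=
  AddMonoidAlgebra.mapDomainRingHom ℤ (sE n)

lemma zsmul_eq_C_mul {n : ℕ} (r : ℤ) (f : R n) :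
    r • f = AddMonoidAlgebra.single 0 r * f := by
  ext x
  rw [AddMonoidAlgebra.coeff_single_zero_mul, AddMonoidAlgebra.coeff_smul_apply, smul_eq_mul]

lemma key_single {n : ℕ} (hn : 2 ≤ n) (m : Fin n → ℤ) (c : ℤ) :
    (1 - X (⟨n - 2, by omega⟩ : Fin n) * X (⟨n - 1, by omega⟩ : Fin n)) ∣
      (AddMonoidAlgebra.single m c - sRH n (ev n (AddMonoidAlgebra.single m c))) := by
  set eee : Fin n → ℤ :=
    Pi.single (⟨n - 2, by omega⟩ : Fin n) 1 + Pi.single (⟨n - 1, by omega⟩ : Fin n) 1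
    with heee
  have h1 : ev n (AddMonoidAlgebra.single m c) = AddMonoidAlgebra.single (evExp n m) c :=
    mdr_single _ _ _
  have h2 : sRH n (AddMonoidAlgebra.single (evExp n m) c)
      = AddMonoidAlgebra.single (sE n (evExp n m)) c := mdr_single _ _ _
  rw [h1, h2, sE_section hn m]
  set a : ℤ := m ⟨n - 1, by omega⟩
  have h3 : (AddMonoidAlgebra.single m c : R n)
        - AddMonoidAlgebra.single (m - a • eee) c
      = AddMonoidAlgebra.single (m - a • eee) c * (Xpow (a • eee) - 1) := by
    rw [mul_sub, mul_one, Xpow]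
    rw [AddMonoidAlgebra.single_mul_single]
    simp
  rw [h3]
  apply Dvd.dvd.mul_left
  rw [X_mul_X, ← heee]
  have := one_sub_dvd eee a
  simpa using this.neg_right

lemma key_dvd {n : ℕ} (hn : 2 ≤ n) (f : R n) :
    (1 - X (⟨n - 2, by omega⟩ : Fin n) * X (⟨n - 1, by omega⟩ : Fin n)) ∣
      (f - sRH n (ev n f)) := by
  induction f using AddMonoidAlgebra.induction_on with
  | of g =>
      have : (AddMonoidAlgebra.of ℤ (Fin n → ℤ)) (Multiplicative.ofAdd g)
          = AddMonoidAlgebra.single g 1 := by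
        simp [AddMonoidAlgebra.of_apply]
      rw [this]
      exact key_single hn g 1
  | add f g hf hg =>
      rw [map_add (ev n) f g, map_add (sRH n)]
      have h2 : f + g - (sRH n (ev n f) + sRH n (ev n g))
          = (f - sRH n (ev n f)) + (g - sRH n (ev n g)) := by ring
      rw [h2]
      exact dvd_add hf hg
  | smul r f hf =>
      rw [zsmul_eq_C_mul, map_mul, map_mul]
      have he : ev n (AddMonoidAlgebra.single (0 : Fin n → ℤ) r)
          = AddMonoidAlgebra.single (evExp n 0) r := mdr_single _ _ _
      rw [map_zero] at he
      have hs : sRH n (AddMonoidAlgebra.single (0 : (Fin (n-2) → ℤ) × ℤ)  r)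
          = AddMonoidAlgebra.single (sE n 0) r := mdr_single _ _ _
      rw [map_zero] at hs
      rw [he, hs, ← mul_sub]
      exact hf.mul_left _

lemma ev_u {n : ℕ} (hn : 2 ≤ n) :
    ev n (X (⟨n - 2, by omega⟩ : Fin n) * X (⟨n - 1, by omega⟩ : Fin n)) = 1 := by
  have hne : ((⟨n - 2, by omega⟩ : Fin n)) ≠ ⟨n - 1, by omega⟩ := by
    simp [Fin.ext_iff]; omega
  rw [X_mul_X]
  have h0 : evExp n (Pi.single (⟨n - 2, by omega⟩ : Fin n) 1
      + Pi.single (⟨n - 1, by omega⟩ : Fin n) 1) = 0 := by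
    refine Prod.ext ?_ ?_
    · funext i
      have hi2 : Fin.castLE (Nat.sub_le n 2) i ≠ ⟨n - 2, by omega⟩ := by
        simp [Fin.ext_iff]; omega
      have hi1 : Fin.castLE (Nat.sub_le n 2) i ≠ ⟨n - 1, by omega⟩ := by
        simp [Fin.ext_iff]; omega
      rw [evExp_fst]
      simp [Pi.single_apply, hi2, hi1]
    · rw [evExp_snd hn]
      simp [Pi.single_apply, hne, hne.symm]
  have h1 : ev n (AddMonoidAlgebra.single (Pi.single (⟨n - 2, by omega⟩ : Fin n) 1
      + Pi.single (⟨n - 1, by omega⟩ : Fin n) 1) 1) = AddMonoidAlgebra.single (evExp n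
      (Pi.single (⟨n - 2, by omega⟩ : Fin n) 1
      + Pi.single (⟨n - 1, by omega⟩ : Fin n) 1)) 1 := mdr_single _ _ _
  rw [Xpow, h1, h0]
  rfl

lemma ev_zero_iff {n : ℕ} (hn : 2 ≤ n) (f : R n) :
    ev n f = 0 ↔
      (1 - X (⟨n - 2, by omega⟩ : Fin n) * X (⟨n - 1, by omega⟩ : Fin n)) ∣ f := by
  constructor
  · intro h
    have := key_dvd hn f
    rwa [h, map_zero, sub_zero] at this
  · rintro ⟨h, rfl⟩
    rw [map_mul, map_sub, map_one, ev_u hn, sub_self, zero_mul]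

lemma permHom_single {n : ℕ} (w : Equiv.Perm (Fin n)) (m : Fin n → ℤ) (c : ℤ) :
    permHom w (AddMonoidAlgebra.single m c) = AddMonoidAlgebra.single (m ∘ w.symm) c :=
  mdr_single _ _ _

lemma permHom_X {n : ℕ} (w : Equiv.Perm (Fin n)) (i : Fin n) :
    permHom w (X i) = X (w i) := by
  rw [X, permHom_single]
  congr 1
  funext x
  simp [Function.comp, Pi.single_apply, Equiv.symm_apply_eq]

lemma permHom_comp_apply {n : ℕ} (w w' : Equiv.Perm (Fin n)) (f : R n) :
    permHom w (permHom w' f) = permHom (w * w') f := by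
  show AddMonoidAlgebra.mapDomainRingHom ℤ (permExp w)
      (AddMonoidAlgebra.mapDomainRingHom ℤ (permExp w') f)
    = AddMonoidAlgebra.mapDomainRingHom ℤ (permExp (w * w')) f
  rw [mdr_apply, mdr_apply, mdr_apply, AddMonoidAlgebra.coeff_ofCoeff, ← Finsupp.mapDomain_comp]
  congr 1

lemma permHom_one_apply {n : ℕ} (f : R n) : permHom (1 : Equiv.Perm (Fin n)) f = f := by
  show AddMonoidAlgebra.mapDomainRingHom ℤ (permExp 1) f = f
  rw [mdr_apply]
  have : ⇑(permExp (1 : Equiv.Perm (Fin n))) = id := by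
    funext m; rfl
  rw [this, Finsupp.mapDomain_id, AddMonoidAlgebra.ofCoeff_coeff]

lemma permHom_inv_apply {n : ℕ} (w : Equiv.Perm (Fin n)) (f : R n) :
    permHom w⁻¹ (permHom w f) = f := by
  rw [permHom_comp_apply, inv_mul_cancel, permHom_one_apply]

def permRE {n : ℕ} (w : Equiv.Perm (Fin n)) : R n ≃+* R n :=
  RingEquiv.ofRingHom (permHom w) (permHom w⁻¹)
    (RingHom.ext fun f => by
      rw [RingHom.comp_apply, permHom_comp_apply, mul_inv_cancel, permHom_one_apply,
        RingHom.id_apply])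
    (RingHom.ext fun f => by
      rw [RingHom.comp_apply, permHom_comp_apply, inv_mul_cancel, permHom_one_apply,
        RingHom.id_apply])

lemma prime_permHom {n : ℕ} (w : Equiv.Perm (Fin n)) {p : R n} (hp : Prime p) :
    Prime (permHom w p) := by
  have : permHom w p = (permRE w).toMulEquiv p := rfl
  rw [this, MulEquiv.prime_iff]
  exact hp

lemma exists_perm_pair {α : Type*} [DecidableEq α] {a b c d : α}
    (hab : a ≠ b) (hcd : c ≠ d) : ∃ w : Equiv.Perm α, w a = c ∧ w b = d := by
  refine ⟨(Equiv.swap a c).trans (Equiv.swap ((Equiv.swap a c) b) d), ?_, ?_⟩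
  · have h1 : (Equiv.swap a c) a = c := Equiv.swap_apply_left a c
    have h2 : (Equiv.swap a c) b ≠ c := by
      rw [Ne, Equiv.swap_apply_eq_iff, Equiv.swap_apply_right]
      exact hab.symm
    simp only [Equiv.trans_apply, h1]
    exact Equiv.swap_apply_of_ne_of_ne h2.symm hcd
  · simp only [Equiv.trans_apply]
    exact Equiv.swap_apply_left _ d

instance Rn_isDomain (n : ℕ) : IsDomain (R n) := NoZeroDivisors.to_isDomain _

lemma prime_one_sub_u {n : ℕ} (hn : 2 ≤ n) :
    Prime (1 - X (⟨n - 2, by omega⟩ : Fin n) * X (⟨n - 1, by omega⟩ : Fin n)) := by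
  refine ⟨?_, ?_, ?_⟩
  · intro h0
    have h1 : X (⟨n - 2, by omega⟩ : Fin n) * X (⟨n - 1, by omega⟩ : Fin n) = 1 :=
      (sub_eq_zero.1 h0).symm
    rw [X_mul_X] at h1
    have h2 : (1 : R n) = AddMonoidAlgebra.single 0 1 := AddMonoidAlgebra.one_def
    rw [Xpow, h2] at h1
    rcases AddMonoidAlgebra.single_inj.1 h1 with ⟨he, -⟩ | ⟨h1, -⟩
    · have := congrFun he (⟨n - 1, by omega⟩ : Fin n)
      have hne : ((⟨n - 2, by omega⟩ : Fin n)) ≠ ⟨n - 1, by omega⟩ := by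
        simp [Fin.ext_iff]; omega
      simp [Pi.single_apply, hne] at this
    · exact one_ne_zero h1
  · intro hu
    have := (ev_zero_iff hn 1).2 hu.dvd
    rw [map_one] at this
    exact one_ne_zero this
  · intro a b hab
    have := (ev_zero_iff hn (a * b)).2 hab
    rw [map_mul] at this
    rcases mul_eq_zero.1 this with h | h
    · exact Or.inl ((ev_zero_iff hn a).1 h)
    · exact Or.inr ((ev_zero_iff hn b).1 h)

lemma perm_one_sub_XX {n : ℕ} (w : Equiv.Perm (Fin n)) (i j : Fin n) :
    permHom w (1 - X i * X j) = 1 - X (w i) * X (w j) := by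
  rw [map_sub, map_one, map_mul, permHom_X, permHom_X]

lemma prime_one_sub_XX {n : ℕ} (hn : 2 ≤ n) {i j : Fin n} (hij : i ≠ j) :
    Prime (1 - X i * X j) := by
  have hne : ((⟨n - 2, by omega⟩ : Fin n)) ≠ ⟨n - 1, by omega⟩ := by
    simp [Fin.ext_iff]; omega
  obtain ⟨w, hw2, hw1⟩ := exists_perm_pair hne hij
  have h : (1 : R n) - X i * X j
      = permHom w (1 - X (⟨n - 2, by omega⟩ : Fin n) * X (⟨n - 1, by omega⟩ : Fin n)) := by
    rw [perm_one_sub_XX, hw2, hw1]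
  rw [h]
  exact prime_permHom w (prime_one_sub_u hn)

lemma dvd_of_permHom_dvd {n : ℕ} (w : Equiv.Perm (Fin n)) {a b : R n}
    (h : permHom w a ∣ permHom w b) : a ∣ b := by
  have := map_dvd (permHom w⁻¹) h
  rwa [permHom_inv_apply, permHom_inv_apply] at this

lemma not_assoc {n : ℕ} (hn : 2 ≤ n) {i j k l : Fin n}
    (hij : i < j) (hkl : k < l) (hne : ¬(i = k ∧ j = l)) :
    ¬ Associated (1 - X i * X j) (1 - X k * X l) := by
  intro hA
  have hne2 : ((⟨n - 2, by omega⟩ : Fin n)) ≠ ⟨n - 1, by omega⟩ := by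
    simp [Fin.ext_iff]; omega
  obtain ⟨w, hw2, hw1⟩ := exists_perm_pair hne2 hij.ne
  set a : Fin n := w.symm k with ha
  set b : Fin n := w.symm l with hb
  have h1 : permHom w (1 - X (⟨n - 2, by omega⟩ : Fin n) * X (⟨n - 1, by omega⟩ : Fin n))
      = 1 - X i * X j := by rw [perm_one_sub_XX, hw2, hw1]
  have h2 : permHom w (1 - X a * X b) = 1 - X k * X l := by
    rw [perm_one_sub_XX, ha, hb, Equiv.apply_symm_apply, Equiv.apply_symm_apply]
  have hd : permHom w (1 - X (⟨n - 2, by omega⟩ : Fin n) * X (⟨n - 1, by omega⟩ : Fin n))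
      ∣ permHom w (1 - X a * X b) := by rw [h1, h2]; exact hA.dvd
  have hd' := dvd_of_permHom_dvd w hd
  have hev : ev n (1 - X a * X b) = 0 := (ev_zero_iff hn _).2 hd'
  have hab : a ≠ b := fun h => hkl.ne (w.symm.injective h)
  -- compute ev (1 - X a * X b)
  rw [map_sub, map_one, X_mul_X] at hev
  have h3 : ev n (AddMonoidAlgebra.single (Pi.single a 1 + Pi.single b 1) (1:ℤ))
      = AddMonoidAlgebra.single (evExp n (Pi.single a 1 + Pi.single b 1)) 1 :=
    mdr_single _ _ _
  rw [Xpow, h3, sub_eq_zero] at hev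
  have h4 : (1 : AddMonoidAlgebra ℤ ((Fin (n-2) → ℤ) × ℤ)) = AddMonoidAlgebra.single 0 1 :=
    AddMonoidAlgebra.one_def
  rw [h4] at hev
  have h5 : evExp n (Pi.single a 1 + Pi.single b 1) = 0 := by
    rcases AddMonoidAlgebra.single_inj.1 hev with ⟨he, -⟩ | ⟨h1', -⟩
    · exact he.symm
    · exact absurd h1' one_ne_zero
  -- the exponent vector kills all coordinates < n-2
  have hcoord : ∀ c : Fin n, c = a ∨ c = b → ¬ ((c : ℕ) < n - 2) := by
    intro c hc hlt
    have := congrFun (congrArg Prod.fst h5) ⟨(c : ℕ), hlt⟩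
    rw [evExp_fst] at this
    have hcast : Fin.castLE (Nat.sub_le n 2) (⟨(c : ℕ), hlt⟩ : Fin (n - 2)) = c := by
      simp [Fin.ext_iff]
    rw [hcast] at this
    rcases hc with rfl | rfl
    · simp [Pi.single_apply, hab.symm] at this
    · simp [Pi.single_apply, hab] at this
  have hA2 : (a : ℕ) = n - 2 ∨ (a : ℕ) = n - 1 := by
    have := hcoord a (Or.inl rfl); have := a.isLt; omega
  have hB2 : (b : ℕ) = n - 2 ∨ (b : ℕ) = n - 1 := by
    have := hcoord b (Or.inr rfl); have := b.isLt; omega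
  -- so {a,b} = {n-2, n-1}
  have hk : k = w a := (Equiv.apply_symm_apply w k).symm
  have hl : l = w b := (Equiv.apply_symm_apply w l).symm
  rcases hA2 with hA2 | hA2 <;> rcases hB2 with hB2 | hB2
  · exact hab (Fin.ext (hA2.trans hB2.symm))
  · -- a = in2, b = in1 : k = i, l = j
    have ha' : a = ⟨n - 2, by omega⟩ := Fin.ext hA2
    have hb' : b = ⟨n - 1, by omega⟩ := Fin.ext hB2
    exact hne ⟨by rw [hk, ha', hw2], by rw [hl, hb', hw1]⟩
  · -- a = in1, b = in2 : k = j, l = i, contradicting i < j, k < l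
    have ha' : a = ⟨n - 1, by omega⟩ := Fin.ext hA2
    have hb' : b = ⟨n - 2, by omega⟩ := Fin.ext hB2
    have hk' : k = j := by rw [hk, ha', hw1]
    have hl' : l = i := by rw [hl, hb', hw2]
    rw [hk', hl'] at hkl
    exact lt_asymm hij hkl
  · exact hab (Fin.ext (hA2.trans hB2.symm))

lemma prod_primes_dvd'' {α ι : Type*} [CommMonoidWithZero α] [IsCancelMulZero α] (s : Finset ι) :
    ∀ (f : ι → α) (x : α), (∀ i ∈ s, Prime (f i)) →
      (∀ i ∈ s, ∀ j ∈ s, i ≠ j → ¬ Associated (f i) (f j)) →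
      (∀ i ∈ s, f i ∣ x) → (∏ i ∈ s, f i) ∣ x := by
  classical
  induction s using Finset.induction_on with
  | empty => intro f x _ _ _; simp
  | @insert a s ha ih =>
      intro f x hp hna hd
      rw [Finset.prod_insert ha]
      obtain ⟨y, rfl⟩ : (∏ i ∈ s, f i) ∣ x :=
        ih f x (fun i hi => hp i (Finset.mem_insert_of_mem hi))
          (fun i hi j hj hij => hna i (Finset.mem_insert_of_mem hi) j
            (Finset.mem_insert_of_mem hj) hij)
          (fun i hi => hd i (Finset.mem_insert_of_mem hi))
      have hpa := hp a (Finset.mem_insert_self a s)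
      have hay : f a ∣ y := by
        rcases hpa.2.2 _ _ (hd a (Finset.mem_insert_self a s)) with h | h
        · exfalso
          obtain ⟨j, hj, hdj⟩ := (hpa.dvd_finset_prod_iff _).1 h
          have haj : a ≠ j := fun he => ha (he ▸ hj)
          exact hna a (Finset.mem_insert_self a s) j (Finset.mem_insert_of_mem hj) haj
            (hpa.associated_of_dvd (hp j (Finset.mem_insert_of_mem hj)) hdj)
        · exact h
      obtain ⟨z, rfl⟩ := hay
      exact ⟨z, by rw [← mul_assoc, mul_comm _ (f a)]⟩

lemma symmP_P (n : ℕ) : ∀ w : Equiv.Perm (Fin n), permHom w (P n) = P n := by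
  intro w
  rw [P, map_prod]
  have key : ∀ p ∈ Finset.univ.filter (fun p : Fin n × Fin n => p.1 < p.2),
      permHom w (1 - X p.1 * X p.2) = 1 - X (w p.1) * X (w p.2) := fun p _ =>
    perm_one_sub_XX w p.1 p.2
  rw [Finset.prod_congr rfl key]
  set S := Finset.univ.filter (fun p : Fin n × Fin n => p.1 < p.2) with hS
  have memS : ∀ p : Fin n × Fin n, p ∈ S ↔ p.1 < p.2 := by
    intro p; simp [hS]
  refine Finset.prod_bij'
    (fun p _ => if w p.1 < w p.2 then (w p.1, w p.2) else (w p.2, w p.1))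
    (fun q _ => if w.symm q.1 < w.symm q.2 then (w.symm q.1, w.symm q.2)
      else (w.symm q.2, w.symm q.1)) ?_ ?_ ?_ ?_ ?_
  · intro p hp
    rcases lt_or_gt_of_ne (fun h : w p.1 = w p.2 => ((memS p).1 hp).ne (w.injective h))
      with h | h
    · rw [if_pos h, memS]; exact h
    · rw [if_neg (asymm h), memS]; exact h
  · intro q hq
    rcases lt_or_gt_of_ne
      (fun h : w.symm q.1 = w.symm q.2 => ((memS q).1 hq).ne (w.symm.injective h))
      with h | h
    · rw [if_pos h, memS]; exact h
    · rw [if_neg (asymm h), memS]; exact h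
  · intro p hp
    have hp12 := (memS p).1 hp
    by_cases h : w p.1 < w p.2
    · simp only [if_pos h, Equiv.symm_apply_apply]
      rw [if_pos hp12]
    · simp only [if_neg h, Equiv.symm_apply_apply]
      rw [if_neg (by exact fun hc => absurd hp12 (asymm hc))]
  · intro q hq
    have hq12 := (memS q).1 hq
    by_cases h : w.symm q.1 < w.symm q.2
    · simp only [if_pos h, Equiv.apply_symm_apply]
      rw [if_pos hq12]
    · simp only [if_neg h, Equiv.apply_symm_apply]
      rw [if_neg (by exact fun hc => absurd hq12 (asymm hc))]
  · intro p hp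
    by_cases h : w p.1 < w p.2
    · rw [if_pos h]
    · rw [if_neg h]
      dsimp only
      rw [mul_comm]

lemma P_ne_zero {n : ℕ} (hn : 2 ≤ n) : P n ≠ 0 := by
  rw [P, Finset.prod_ne_zero_iff]
  intro p hp
  have hp12 : p.1 < p.2 := by simpa using hp
  exact (prime_one_sub_XX hn hp12.ne).ne_zero

lemma u_dvd_P {n : ℕ} (hn : 2 ≤ n) :
    (1 - X (⟨n - 2, by omega⟩ : Fin n) * X (⟨n - 1, by omega⟩ : Fin n)) ∣ P n := by
  rw [P]
  have hmem : ((⟨n - 2, by omega⟩ : Fin n), (⟨n - 1, by omega⟩ : Fin n)) ∈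
      Finset.univ.filter (fun p : Fin n × Fin n => p.1 < p.2) :=
    Finset.mem_filter.2 ⟨Finset.mem_univ _, Fin.mk_lt_mk.2 (by omega)⟩
  have h := Finset.dvd_prod_of_mem (fun p : Fin n × Fin n => 1 - X p.1 * X p.2) hmem
  beta_reduce at h
  exact h

lemma ev_P {n : ℕ} (hn : 2 ≤ n) : ev n (P n) = 0 :=
  (ev_zero_iff hn (P n)).2 (u_dvd_P hn)

lemma main_iff {n : ℕ} (hn : 2 ≤ n) (f : R n) (hf : SymmP f) :
    ev n f = 0 ↔ ∃ g : R n, SymmP g ∧ f = P n * g := by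
  constructor
  · intro hev
    obtain ⟨h, hh⟩ := (ev_zero_iff hn f).1 hev
    set S := Finset.univ.filter (fun p : Fin n × Fin n => p.1 < p.2) with hS
    have memS : ∀ p : Fin n × Fin n, p ∈ S ↔ p.1 < p.2 := by intro p; simp [hS]
    have hne2 : ((⟨n - 2, by omega⟩ : Fin n)) ≠ ⟨n - 1, by omega⟩ := by
      simp [Fin.ext_iff]; omega
    have hdvd : ∀ p ∈ S, (1 - X p.1 * X p.2) ∣ f := by
      intro p hp
      have hp12 := (memS p).1 hp
      obtain ⟨w, hw2, hw1⟩ := exists_perm_pair hne2 hp12.ne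
      refine ⟨permHom w h, ?_⟩
      conv_lhs => rw [← hf w, hh]
      rw [map_mul, perm_one_sub_XX, hw2, hw1]
    have hPd : (∏ p ∈ S, (1 - X p.1 * X p.2)) ∣ f := by
      refine prod_primes_dvd'' S _ f ?_ ?_ hdvd
      · intro p hp
        exact prime_one_sub_XX hn ((memS p).1 hp).ne
      · intro p hp q hq hpq
        refine not_assoc hn ((memS p).1 hp) ((memS q).1 hq) ?_
        intro ⟨h1, h2⟩
        exact hpq (Prod.ext h1 h2)
    obtain ⟨g, hg⟩ := hPd
    have hPS : P n = ∏ p ∈ S, (1 - X p.1 * X p.2) := by rw [P, hS]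
    rw [← hPS] at hg
    refine ⟨g, ?_, hg⟩
    intro w
    have hc : P n * permHom w g = P n * g := by
      calc P n * permHom w g = permHom w (P n) * permHom w g := by rw [symmP_P]
        _ = permHom w (P n * g) := by rw [map_mul]
        _ = permHom w f := by rw [← hg]
        _ = f := hf w
        _ = P n * g := hg
    exact mul_left_cancel₀ (P_ne_zero hn) hc
  · rintro ⟨g, hgs, rfl⟩
    rw [map_mul, ev_P hn, zero_mul]


lemma ds_eq_fst_ev (n : ℕ) (f : R n) :
    ds n f = AddMonoidAlgebra.mapDomainRingHom ℤ
      (AddMonoidHom.fst (Fin (n - 2) → ℤ) ℤ) (ev n f) := by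
  show AddMonoidAlgebra.ofCoeff (Finsupp.mapDomain (⇑(resExp n)) f.coeff)
      = AddMonoidAlgebra.ofCoeff (Finsupp.mapDomain (⇑(AddMonoidHom.fst (Fin (n - 2) → ℤ) ℤ))
        (Finsupp.mapDomain (⇑(evExp n)) f.coeff))
  rw [← Finsupp.mapDomain_comp]
  congr 1

lemma fst_inl (n : ℕ) (g : R (n - 2)) :
    AddMonoidAlgebra.mapDomainRingHom ℤ (AddMonoidHom.fst (Fin (n - 2) → ℤ) ℤ)
      (AddMonoidAlgebra.mapDomainRingHom ℤ (AddMonoidHom.inl (Fin (n - 2) → ℤ) ℤ) g) = g := by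
  rw [mdr_apply, mdr_apply, AddMonoidAlgebra.coeff_ofCoeff, ← Finsupp.mapDomain_comp]
  have h : ⇑(AddMonoidHom.fst (Fin (n - 2) → ℤ) ℤ) ∘ ⇑(AddMonoidHom.inl (Fin (n - 2) → ℤ) ℤ)
      = id := funext fun x => rfl
  rw [h, Finsupp.mapDomain_id, AddMonoidAlgebra.ofCoeff_coeff]

/-- For `n ≥ 2` and a symmetric Laurent polynomial `f`, one
has `evₙ f = 0` iff `f = (∏_{1 ≤ i < j ≤ n} (1 - xᵢxⱼ)) ⬝ g` for some symmetric
Laurent polynomial `g`.  In particular the kernel of `dsₙ` on `Jₙ` equals the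
set of all such products. -/
theorem ker_ds_eq_thinKac (n : ℕ) (hn : 2 ≤ n) :
    (∀ f : R n, SymmP f → (ev n f = 0 ↔ ∃ g : R n, SymmP g ∧ f = P n * g)) ∧
    {f : R n | f ∈ J n ∧ ds n f = 0} = {f : R n | ∃ g : R n, SymmP g ∧ f = P n * g} := by
  refine ⟨fun f hf => main_iff hn f hf, ?_⟩
  ext f
  simp only [Set.mem_setOf_eq]
  constructor
  · rintro ⟨⟨hsym, hnot⟩, hds⟩
    obtain ⟨g₀, hg₀⟩ := hnot hn
    have h1 : ds n f = g₀ := by rw [ds_eq_fst_ev, ← hg₀, fst_inl]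
    have hg0 : g₀ = 0 := h1.symm.trans hds
    have h2 : ev n f = 0 := by rw [← hg₀, hg0, map_zero]
    exact (main_iff hn f hsym).1 h2
  · rintro ⟨g, hgs, rfl⟩
    have hsym : SymmP (P n * g) := fun w => by rw [map_mul, symmP_P, hgs w]
    have hev : ev n (P n * g) = 0 := by rw [map_mul, ev_P hn, zero_mul]
    refine ⟨⟨hsym, fun _ => ⟨0, by rw [map_zero, hev]⟩⟩, ?_⟩
    rw [ds_eq_fst_ev, hev, map_zero]


end
end

section
/- For every n ≥ 1, the following identity holds in the field of fractions of R_n: ∑_{w ∈ S_n} ∏_{1 ≤ i < j ≤ n} (1 − x_{w(i)}^{−1} x_{w(j)})^{−1} = 1. -/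
/-!
Common setup: `R n` is the ring of Laurent polynomials
`ℤ[x₁^{±1}, …, xₙ^{±1}]`, realized as the group algebra over `ℤ` of the
group `ℤ^n` of exponent vectors (`AddMonoidAlgebra ℤ (Fin n → ℤ)`).
-/

noncomputable section

instance instIsDomainR (n : ℕ) : IsDomain (R n) := NoZeroDivisors.to_isDomain _

lemma Xinv_mul_X {n : ℕ} (i : Fin n) : Xinv i * X i = 1 := by
  unfold X Xinv
  rw [AddMonoidAlgebra.single_mul_single, one_mul, ← Pi.single_add, AddMonoidAlgebra.one_def]
  norm_num

lemma X_ne_zero {n : ℕ} (i : Fin n) : X i ≠ 0 := by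
  intro h
  have h' : (Finsupp.single (α := Fin n → ℤ) (M := ℤ) (Pi.single i 1) 1) = 0 := congrArg AddMonoidAlgebra.coeff h
  exact one_ne_zero (Finsupp.single_eq_zero.mp h')

lemma X_inj {n : ℕ} : Function.Injective (X (n := n)) := by
  intro i j h
  unfold X at h
  have hh : (Finsupp.single (α := Fin n → ℤ) (M := ℤ) (Pi.single i 1) 1) = Finsupp.single (α := Fin n → ℤ) (M := ℤ) (Pi.single j 1) 1 := congrArg AddMonoidAlgebra.coeff h
  have h' : (Pi.single i 1 : Fin n → ℤ) = Pi.single j 1 := by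
    rcases (Finsupp.single_eq_single_iff _ _ _ _).mp hh with ⟨ha, _⟩ | ⟨hb, _⟩
    · exact ha
    · exact absurd hb one_ne_zero
  by_contra hne
  have h2 := congrFun h' i
  rw [Pi.single_eq_same] at h2
  rw [Pi.single_eq_of_ne hne] at h2
  exact one_ne_zero h2

open Finset in
lemma prod_pairs {β : Type*} [CommMonoid β] {n : ℕ} (g : Fin n → Fin n → β) :
    ∏ p ∈ Finset.univ.filter (fun p : Fin n × Fin n => p.1 < p.2), g p.1 p.2
      = ∏ i, ∏ j ∈ Finset.Ioi i, g i j := by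
  rw [Finset.prod_sigma']
  refine Finset.prod_nbij' (fun p => ⟨p.1, p.2⟩) (fun x => (x.1, x.2)) ?_ ?_ ?_ ?_ ?_ <;>
    simp

open Finset in
lemma prod_pairs_rev {β : Type*} [CommMonoid β] {n : ℕ} (g : Fin n → Fin n → β) :
    ∏ p ∈ Finset.univ.filter (fun p : Fin n × Fin n => p.1 < p.2), g (Fin.rev p.2) (Fin.rev p.1)
      = ∏ p ∈ Finset.univ.filter (fun p : Fin n × Fin n => p.1 < p.2), g p.1 p.2 := by
  refine Finset.prod_nbij' (fun p => (Fin.rev p.2, Fin.rev p.1))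
    (fun p => (Fin.rev p.2, Fin.rev p.1)) ?_ ?_ ?_ ?_ ?_ <;>
    simp [Fin.rev_lt_rev]


open Finset in
/-- For every `n ≥ 1`, the identity
`∑_{w ∈ Sₙ} ∏_{1 ≤ i < j ≤ n} (1 - x_{w(i)}⁻¹ x_{w(j)})⁻¹ = 1`
holds in the field of fractions of `Rₙ`. -/
theorem denominator_identity (n : ℕ) (hn : 1 ≤ n) :
    ∑ w : Equiv.Perm (Fin n),
      ∏ p ∈ Finset.univ.filter (fun p : Fin n × Fin n => p.1 < p.2),
        (1 - algebraMap (R n) (FractionRing (R n)) (Xinv (w p.1) * X (w p.2)))⁻¹ = 1 := by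
  classical
  set K := FractionRing (R n) with hK
  set φ := algebraMap (R n) K with hφ
  set y : Fin n → K := fun i => φ (X i) with hy
  have hφinj : Function.Injective φ := IsFractionRing.injective _ _
  have hy0 : ∀ i, y i ≠ 0 := by
    intro i h
    exact X_ne_zero i (hφinj (by simpa using h))
  have hyinj : Function.Injective y := fun i j h => X_inj (hφinj h)
  have hXinv : ∀ i, φ (Xinv i) = (y i)⁻¹ := fun i =>
    eq_inv_of_mul_eq_one_left (by rw [hy, ← map_mul, Xinv_mul_X, map_one])
  set S := Finset.univ.filter (fun p : Fin n × Fin n => p.1 < p.2) with hS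
  set ε : Equiv.Perm (Fin n) → K := fun w => ((Equiv.Perm.sign w : ℤ) : K) with hεdef
  have hε : ∀ w, ε w * ε w = 1 := by
    intro w
    show ((Equiv.Perm.sign w : ℤ) : K) * ((Equiv.Perm.sign w : ℤ) : K) = 1
    rw [← Int.cast_mul, ← Units.val_mul, ← sq, Int.units_sq, Units.val_one, Int.cast_one]
  set V := (Matrix.vandermonde y).det with hVdef
  have hVne : V ≠ 0 := by
    rw [hVdef, Matrix.det_vandermonde_ne_zero_iff]
    exact hyinj
  have hsign : ∀ w : Equiv.Perm (Fin n),
      ((Equiv.Perm.sign (Fin.revPerm.trans w) : ℤ) : K) = ε w * ε Fin.revPerm := by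
    intro w
    have : Fin.revPerm.trans w = w * Fin.revPerm := rfl
    rw [this, map_mul, hεdef]
    push_cast
    ring_nf
  have hDw : ∀ w : Equiv.Perm (Fin n),
      ∏ p ∈ S, (y (w p.1) - y (w p.2)) = ε w * ε Fin.revPerm * V := by
    intro w
    have h1 : (Matrix.vandermonde y).submatrix (Fin.revPerm.trans w) id
        = Matrix.vandermonde (fun i => y (w (Fin.rev i))) := by
      ext i j
      simp [Matrix.vandermonde_apply, Matrix.submatrix]
    have h2 := Matrix.det_permute (Fin.revPerm.trans w) (Matrix.vandermonde y)
    rw [h1, Matrix.det_vandermonde] at h2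
    rw [← prod_pairs (fun i j => y (w (Fin.rev j)) - y (w (Fin.rev i)))] at h2
    rw [prod_pairs_rev (fun a b => y (w a) - y (w b))] at h2
    rw [← hS] at h2
    rw [h2, ← hVdef, hsign]
  have hT : ∑ w : Equiv.Perm (Fin n), ε w * ∏ i, y (w i) ^ ((Fin.rev i : ℕ))
      = ε Fin.revPerm * V := by
    have h2 := Matrix.det_permute' Fin.revPerm (Matrix.vandermonde y)
    rw [Matrix.det_apply'] at h2
    rw [← h2]
    apply Finset.sum_congr rfl
    intro w _
    simp only [Matrix.submatrix_apply, Matrix.vandermonde_apply, id_eq, Fin.revPerm_apply]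
    rfl
  have hεinv : ∀ w, (ε w)⁻¹ = ε w := fun w => inv_eq_of_mul_eq_one_right (hε w)
  have hfac : ∀ a b : Fin n, a ≠ b →
      (1 - φ (Xinv a * X b))⁻¹ = y a * (y a - y b)⁻¹ := by
    intro a b hab
    rw [map_mul, hXinv]
    have h0 : y a ≠ 0 := hy0 a
    have hne : y a - y b ≠ 0 := sub_ne_zero.mpr fun h => hab (hyinj h)
    rw [show (1 - (y a)⁻¹ * y (b)) = (y a)⁻¹ * (y a - y b) by rw [mul_sub, inv_mul_cancel₀ h0]]
    rw [mul_inv, inv_inv]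
  have hE : ∀ w : Equiv.Perm (Fin n),
      ∏ p ∈ S, y (w p.1) = ∏ i, y (w i) ^ ((Fin.rev i : ℕ)) := by
    intro w
    rw [hS, prod_pairs (fun i _ => y (w i))]
    apply Finset.prod_congr rfl
    intro i _
    rw [Finset.prod_const, Fin.card_Ioi]
    congr 1
    rw [Fin.val_rev]
    omega
  calc ∑ w : Equiv.Perm (Fin n), ∏ p ∈ S, (1 - φ (Xinv (w p.1) * X (w p.2)))⁻¹
      = ∑ w : Equiv.Perm (Fin n),
          (∏ p ∈ S, y (w p.1)) * (∏ p ∈ S, (y (w p.1) - y (w p.2)))⁻¹ := by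
        apply Finset.sum_congr rfl
        intro w _
        have step1 : ∏ p ∈ S, (1 - φ (Xinv (w p.1) * X (w p.2)))⁻¹
            = ∏ p ∈ S, (y (w p.1) * (y (w p.1) - y (w p.2))⁻¹) := by
          apply Finset.prod_congr rfl
          intro p hp
          have hp' : p.1 < p.2 := by
            rw [hS] at hp
            simpa using hp
          exact hfac _ _ (w.injective.ne (ne_of_lt hp'))
        rw [step1, Finset.prod_mul_distrib, ← Finset.prod_inv_distrib]
    _ = ∑ w : Equiv.Perm (Fin n),
          (ε Fin.revPerm * V⁻¹) * (ε w * ∏ i, y (w i) ^ ((Fin.rev i : ℕ))) := by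
        apply Finset.sum_congr rfl
        intro w _
        rw [hE, hDw, mul_inv, mul_inv, hεinv, hεinv]
        ring
    _ = (ε Fin.revPerm * V⁻¹) * (ε Fin.revPerm * V) := by
        rw [← Finset.mul_sum, hT]
    _ = (ε Fin.revPerm * ε Fin.revPerm) * (V⁻¹ * V) := by ring
    _ = 1 := by rw [hε Fin.revPerm, inv_mul_cancel₀ hVne, one_mul]

end
end

section
/- Let n and k be integers with 1 ≤ k and 2k ≤ n, and let φ_k : R_n → ℤ[x_1^{±1}, …, x_k^{±1}, x_{2k+1}^{±1}, …, x_n^{±1}] be the ring homomorphism determined by x_i ↦ x_i for 1 ≤ i ≤ k, x_{k+i} ↦ x_i^{−1} for 1 ≤ i ≤ k, and x_j ↦ x_j for 2k < j ≤ n. Set P := ∏_{1 ≤ i < j ≤ n, j > 2k} (1 − x_i x_j) ∈ R_n. Then for every permutation w ∈ S_n that does not preserve the subset {1, …, 2k} (equivalently, w ∉ S_{2k} × S_{n−2k}), one has φ_k(w(P)) = 0, where w acts on R_n by permuting the variables. -/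
/-!
Common setup: `R n` is the ring of Laurent polynomials
`ℤ[x₁^{±1}, …, xₙ^{±1}]`, realized as the group algebra over `ℤ` of the
group `ℤ^n` of exponent vectors (`AddMonoidAlgebra ℤ (Fin n → ℤ)`).
-/

noncomputable section

/-- The map of exponent groups underlying `φ_k : xᵢ ↦ xᵢ (1 ≤ i ≤ k)`,
`x_{k+i} ↦ xᵢ⁻¹ (1 ≤ i ≤ k)`, `xⱼ ↦ xⱼ (2k < j ≤ n)`.  The target is the
exponent group of `ℤ[x₁^{±1},…,x_k^{±1}, x_{2k+1}^{±1},…,xₙ^{±1}]`. -/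
def phiExp (n k : ℕ) (h : 2 * k ≤ n) :
    (Fin n → ℤ) →+ ((Fin k → ℤ) × (Fin (n - 2 * k) → ℤ)) :=
  AddMonoidHom.mk'
    (fun m => (fun i => m ⟨i, by have := i.isLt; omega⟩ - m ⟨k + i, by have := i.isLt; omega⟩,
               fun j => m ⟨2 * k + j, by have := j.isLt; omega⟩))
    (by
      intro a b
      refine Prod.ext (funext fun i => ?_) (funext fun j => ?_)
      · simp; ring
      · rfl)

/-- The ring homomorphism
`φ_k : Rₙ → ℤ[x₁^{±1},…,x_k^{±1}, x_{2k+1}^{±1},…,xₙ^{±1}]` determined by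
`xᵢ ↦ xᵢ` for `1 ≤ i ≤ k`, `x_{k+i} ↦ xᵢ⁻¹` for `1 ≤ i ≤ k`, and `xⱼ ↦ xⱼ`
for `2k < j ≤ n`. -/
def phi (n k : ℕ) (h : 2 * k ≤ n) :
    R n →+* AddMonoidAlgebra ℤ ((Fin k → ℤ) × (Fin (n - 2 * k) → ℤ)) :=
  AddMonoidAlgebra.mapDomainRingHom ℤ (phiExp n k h)

lemma phi_X_mul_X (n k : ℕ) (h : 2 * k ≤ n) (u v : Fin n) :
    phi n k h (X u * X v) =
      AddMonoidAlgebra.single (phiExp n k h (Pi.single u 1 + Pi.single v 1)) 1 := by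
  have hX : ∀ u : Fin n, phi n k h (X u) =
      AddMonoidAlgebra.single (phiExp n k h (Pi.single u 1)) 1 := by
    intro u
    unfold phi X
    show AddMonoidAlgebra.mapDomain _ _ = _
    rw [AddMonoidAlgebra.mapDomain_single]
  rw [map_mul, hX, hX, AddMonoidAlgebra.single_mul_single, map_add, mul_one]

lemma phiExp_pair_zero (n k : ℕ) (h : 2 * k ≤ n) (u v : Fin n) (a : ℕ) (ha : a < k)
    (huv : ((u : ℕ) = a ∧ (v : ℕ) = a + k) ∨ ((u : ℕ) = a + k ∧ (v : ℕ) = a)) :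
    phiExp n k h (Pi.single u 1 + Pi.single v 1) = 0 := by
  refine Prod.ext (funext fun i => ?_) (funext fun i => ?_) <;>
  · simp only [phiExp, AddMonoidHom.mk'_apply, Pi.add_apply, Pi.single_apply, Fin.ext_iff,
      Prod.fst_zero, Prod.snd_zero, Pi.zero_apply, Fin.val_mk]
    have hi := i.isLt
    rcases huv with ⟨h1, h2⟩ | ⟨h1, h2⟩ <;> rw [h1, h2] <;> split_ifs <;> omega

lemma phi_perm_factor_zero (n k : ℕ) (hkn : 2 * k ≤ n) (w : Equiv.Perm (Fin n))
    (p q : Fin n) (a : ℕ) (ha : a < k)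
    (huv : ((w p : ℕ) = a ∧ (w q : ℕ) = a + k) ∨
      ((w p : ℕ) = a + k ∧ (w q : ℕ) = a)) :
    phi n k hkn (permHom w (1 - X p * X q)) = 0 := by
  have h1 : permHom w (1 - X p * X q) = 1 - X (w p) * X (w q) := by
    rw [map_sub, map_one, map_mul, permHom_X, permHom_X]
  rw [h1, map_sub, map_one, phi_X_mul_X, phiExp_pair_zero n k hkn _ _ a ha huv,
    ← AddMonoidAlgebra.one_def, sub_self]

/-- Let `1 ≤ k`, `2k ≤ n` and
`P := ∏_{1 ≤ i < j ≤ n, j > 2k} (1 - xᵢxⱼ)`.  For every permutation `w ∈ Sₙ`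
that does not preserve the subset of the first `2k` indices (i.e.
`w ∉ S_{2k} × S_{n-2k}`), one has `φ_k (w(P)) = 0`. -/
theorem phi_perm_prod_eq_zero (n k : ℕ) (hk : 1 ≤ k) (hkn : 2 * k ≤ n)
    (w : Equiv.Perm (Fin n))
    (hw : ¬ ∀ i : Fin n, (i : ℕ) < 2 * k → ((w i : Fin n) : ℕ) < 2 * k) :
    phi n k hkn (permHom w
      (∏ p ∈ Finset.univ.filter
          (fun p : Fin n × Fin n => p.1 < p.2 ∧ 2 * k ≤ (p.2 : ℕ)),
        (1 - X p.1 * X p.2))) = 0 := by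
  -- find j₀ with 2k ≤ j₀ and w j₀ < 2k
  have hex : ∃ j : Fin n, 2 * k ≤ (j : ℕ) ∧ ((w j : Fin n) : ℕ) < 2 * k := by
    by_contra hc
    push_neg at hc
    apply hw
    intro i hi
    by_contra hge
    push_neg at hge
    set S : Finset (Fin n) := Finset.univ.filter (fun x => 2 * k ≤ (x : ℕ)) with hS
    have hsub : S.image w ⊆ S := by
      intro x hx
      simp only [hS, Finset.mem_image, Finset.mem_filter, Finset.mem_univ, true_and] at hx ⊢
      obtain ⟨y, hy, rfl⟩ := hx
      exact hc y hy
    have hcard : S.card ≤ (S.image w).card :=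
      (Finset.card_image_of_injective S w.injective).ge
    have heq : S.image w = S := Finset.eq_of_subset_of_card_le hsub hcard
    have : w i ∈ S := by simp [hS, hge]
    rw [← heq, Finset.mem_image] at this
    obtain ⟨y, hy, hyi⟩ := this
    have : y = i := w.injective hyi
    subst this
    simp only [hS, Finset.mem_filter] at hy
    omega
  obtain ⟨j₀, hj₀, hwj₀⟩ := hex
  -- define the partner index
  set b : Fin n := w j₀ with hb
  have hbn : (b : ℕ) < 2 * k := hwj₀
  obtain ⟨a, ha, hba⟩ : ∃ a : ℕ, a < k ∧ ((b : ℕ) = a ∨ (b : ℕ) = a + k) := by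
    rcases lt_or_ge (b : ℕ) k with h | h
    · exact ⟨b, h, Or.inl rfl⟩
    · exact ⟨(b : ℕ) - k, by omega, Or.inr (by omega)⟩
  set b' : Fin n := if (b : ℕ) = a then ⟨a + k, by omega⟩ else ⟨a, by omega⟩ with hb'
  have hb'v : ((b : ℕ) = a ∧ (b' : ℕ) = a + k) ∨ ((b : ℕ) = a + k ∧ (b' : ℕ) = a) := by
    rcases hba with h | h
    · left; exact ⟨h, by simp [hb', h]⟩
    · right
      refine ⟨h, ?_⟩
      have : ¬ ((b : ℕ) = a) := by omega
      simp [hb', this]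
  set i₀ : Fin n := w.symm b' with hi₀
  have hwi₀ : w i₀ = b' := w.apply_symm_apply b'
  have hne : i₀ ≠ j₀ := by
    intro h
    have : b' = b := by rw [← hwi₀, h, ← hb]
    omega
  -- choose the ordered pair
  obtain ⟨p, q, hpq, hq, hcase⟩ :
      ∃ p q : Fin n, p < q ∧ 2 * k ≤ (q : ℕ) ∧
        (((w p : ℕ) = a ∧ (w q : ℕ) = a + k) ∨ ((w p : ℕ) = a + k ∧ (w q : ℕ) = a)) := by
    rcases lt_or_gt_of_ne hne with h | h
    · refine ⟨i₀, j₀, h, hj₀, ?_⟩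
      rw [hwi₀, ← hb]
      omega
    · refine ⟨j₀, i₀, h, ?_, ?_⟩
      · have : (j₀ : ℕ) < (i₀ : ℕ) := h
        omega
      · rw [hwi₀, ← hb]
        omega
  rw [map_prod, map_prod]
  refine Finset.prod_eq_zero (i := (p, q)) ?_ ?_
  · simp [hpq, hq]
  · exact phi_perm_factor_zero n k hkn w p q a ha hcase

end
end
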